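/- arXiv:2008.08406 — 2 statements merged into one kernel-verified Lean document; each statement's English description precedes it below -/
import Mathlib

section
/- Let μ₀ < 0 and λ > 0. For s in a neighborhood of 0 in ℝ define ω₁(s) := √((λ+s)|μ₀|) and ω₂(s) := √((λ+s)|μ₀| + 1). Then the determinant of the 2×2 matrix whose first column is (ω₁'(0), ω₂'(0))^T and whose second column is (ω₁(0), ω₂(0))^T equals |μ₀| / (2√(λ|μ₀|(λ|μ₀|+1))); in particular it is nonzero, so the matrix [ω'(0) ω(0)] has rank 2. -/
/-!
Both frequencies are square roots of affine functions of `s` with the same slope `m = |μ₀|`, so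
`ωᵢ'(0) = m / (2 ωᵢ(0))` and the determinant is `m (ω₂(0)² - ω₁(0)²) / (2 ω₁(0) ω₂(0))`.
The squares differ by exactly `1`, which leaves `m / (2 √(λm (λm + 1)))`.
-/

open Real

theorem hasDerivAt_sqrt_add_mul_add {lam m c : ℝ} (h : lam * m + c ≠ 0) :
    HasDerivAt (fun s => √((lam + s) * m + c)) (m / (2 * √(lam * m + c))) 0 := by
  have hlin : HasDerivAt (fun s : ℝ => (lam + s) * m + c) m 0 := by
    simpa using (((hasDerivAt_id (0 : ℝ)).const_add lam).mul_const m).add_const c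
  simpa using hlin.sqrt (by simpa using h)

theorem det_div_sqrt_sqrt {a b : ℝ} (m : ℝ) (ha : 0 < a) (hb : 0 < b) :
    !![m / (2 * √a), √a; m / (2 * √b), √b].det = m * (b - a) / (2 * √(a * b)) := by
  have hsa := sqrt_pos.mpr ha
  have hsb := sqrt_pos.mpr hb
  rw [Matrix.det_fin_two_of, sqrt_mul ha.le]
  field_simp
  rw [sq_sqrt ha.le, sq_sqrt hb.le]

/-- the nondegeneracy determinant computation. -/
theorem determinant_frequency_matrix (μ₀ lam : ℝ) (hμ₀ : μ₀ < 0) (hlam : 0 < lam) :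
    let ω₁ : ℝ → ℝ := fun s => Real.sqrt ((lam + s) * |μ₀|)
    let ω₂ : ℝ → ℝ := fun s => Real.sqrt ((lam + s) * |μ₀| + 1)
    Matrix.det !![deriv ω₁ 0, ω₁ 0; deriv ω₂ 0, ω₂ 0]
        = |μ₀| / (2 * Real.sqrt (lam * |μ₀| * (lam * |μ₀| + 1))) ∧
      Matrix.det !![deriv ω₁ 0, ω₁ 0; deriv ω₂ 0, ω₂ 0] ≠ 0 ∧
      (!![deriv ω₁ 0, ω₁ 0; deriv ω₂ 0, ω₂ 0] : Matrix (Fin 2) (Fin 2) ℝ).rank = 2 := by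
  intro ω₁ ω₂
  set m := |μ₀|
  have hm : 0 < m := abs_pos.mpr hμ₀.ne
  have ha : 0 < lam * m := mul_pos hlam hm
  have hd₁ : deriv ω₁ 0 = m / (2 * √(lam * m)) := by
    simpa using (hasDerivAt_sqrt_add_mul_add (c := 0) (by rw [add_zero]; exact ha.ne')).deriv
  have hd₂ : deriv ω₂ 0 = m / (2 * √(lam * m + 1)) :=
    (hasDerivAt_sqrt_add_mul_add (by positivity)).deriv
  have hdet : Matrix.det !![deriv ω₁ 0, ω₁ 0; deriv ω₂ 0, ω₂ 0]
      = m / (2 * √(lam * m * (lam * m + 1))) := by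
    simp only [hd₁, hd₂, ω₁, ω₂, add_zero]
    rw [det_div_sqrt_sqrt m ha (by positivity), add_sub_cancel_left, mul_one]
  have hdet_ne : Matrix.det !![deriv ω₁ 0, ω₁ 0; deriv ω₂ 0, ω₂ 0] ≠ 0 := by
    rw [hdet]
    have : 0 < √(lam * m * (lam * m + 1)) := sqrt_pos.mpr (by positivity)
    positivity
  exact ⟨hdet, hdet_ne,
    Matrix.rank_of_isUnit _ ((Matrix.isUnit_iff_isUnit_det _).mpr hdet_ne.isUnit)⟩
end

section
/- Let N ≥ 2 and let b : ℝ^{N−1} → ℝ be bounded and continuous. Suppose μ₀ < 0 is a radial eigenvalue of −Δ − b on ℝ^{N−1} with eigenfunction ψ₀, and suppose no μ ≤ 0 with μ ≠ μ₀ is a radial eigenvalue of −Δ − b. Write points of ℝ^N as x = (x', x_N) with x' ∈ ℝ^{N−1}, and view b as a function of x independent of x_N. Then for μ ≤ 0 the following are equivalent: (i) there exists a nonzero w ∈ C²(ℝ^N), radially symmetric in x', even and 2π-periodic in x_N, with ∫_{ℝ^{N−1}×(−π,π)} w² < ∞, satisfying −Δw − b(x')w = μw pointwise on ℝ^N; (ii)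 μ = μ₀ + k² for some integer k ≥ 0 (with μ₀ + k² ≤ 0). Moreover, in case (ii) one may take w(x', x_N) = ψ₀(x') cos(k x_N). -/
open Real MeasureTheory

noncomputable section

/-- ℝᵏ with the Euclidean norm. -/
abbrev E (k : ℕ) := EuclideanSpace ℝ (Fin k)

/-- Sum of pure second partial derivatives: the Laplacian (for C² functions). -/
def lap {k : ℕ} (v : E k → ℝ) (p : E k) : ℝ :=
  ∑ i, fderiv ℝ (fun z => fderiv ℝ v z (EuclideanSpace.single i 1)) p
      (EuclideanSpace.single i 1)

/-- Second derivative of a function of one real variable. -/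
def d2 (g : ℝ → ℝ) (t : ℝ) : ℝ := deriv (deriv g) t

/-- v is a radial eigenfunction of −Δ − b on ℝ^{N−1} with eigenvalue μ. -/
def RadEigenfun {k : ℕ} (b : E k → ℝ) (μ : ℝ) (v : E k → ℝ) : Prop :=
  v ≠ 0 ∧ ContDiff ℝ 2 v ∧ (∀ x y : E k, ‖x‖ = ‖y‖ → v x = v y) ∧
    Integrable (fun x => (v x) ^ 2) ∧
    ∀ x, -lap v x - b x * v x = μ * v x

/-- μ is a radial eigenvalue of −Δ − b on ℝ^{N−1}. -/
def IsRadEigenvalue {k : ℕ} (b : E k → ℝ) (μ : ℝ) : Prop :=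
  ∃ v, RadEigenfun b μ v

/-- `w x' x_N` is a symmetric-periodic eigenfunction on ℝᴺ = ℝ^{N−1} × ℝ, for the
potential b = b(x') viewed as independent of x_N, with eigenvalue μ:  w is nonzero,
C², radially symmetric in x', even and 2π-periodic in x_N, square-integrable on
ℝ^{N−1} × (−π,π), and −Δw − b w = μ w pointwise (Δ in all N variables). -/
def SymPerEigenfun {k : ℕ} (b : E k → ℝ) (μ : ℝ) (w : E k → ℝ → ℝ) : Prop :=
  w ≠ 0 ∧ ContDiff ℝ 2 (fun p : E k × ℝ => w p.1 p.2) ∧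
    (∀ x x' t, ‖x‖ = ‖x'‖ → w x t = w x' t) ∧
    (∀ x t, w x (-t) = w x t) ∧ (∀ x t, w x (t + 2 * π) = w x t) ∧
    IntegrableOn (fun p : E k × ℝ => (w p.1 p.2) ^ 2) (Set.univ ×ˢ Set.Ioo (-π) π) ∧
    ∀ x t, -(lap (fun z => w z t) x + d2 (w x) t) - b x * w x t = μ * w x t

/-! Separation of variables. For a symmetric-periodic eigenfunction `w` with eigenvalue `μ`,
the cosine coefficients `x' ↦ ∫_{-π}^{π} w(x', t) cos(n t) dt` are radial, C² (differentiation
under the integral sign) and square integrable (Cauchy–Schwarz in `t`); integrating by parts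
twice in `t`, where the boundary terms cancel by periodicity, they solve the radial equation with
eigenvalue `μ - n²`. Since each `w(x', ·)` is even, continuous and 2π-periodic, completeness of
the Fourier basis of `L²(ℝ/2πℤ)` makes some coefficient nonzero, so `μ - n² ≤ 0` is a radial
eigenvalue and must be `μ₀`. Conversely, `ψ₀(x') cos(k x_N)` is an eigenfunction by direct
computation. -/

open Function

theorem contDiff_uncurry_fderiv_left {X Y G : Type*} [NormedAddCommGroup X] [NormedSpace ℝ X]
    [NormedAddCommGroup Y] [NormedSpace ℝ Y] [NormedAddCommGroup G] [NormedSpace ℝ G]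
    {n : ℕ} {F : X → Y → G}
    (hF : ContDiff ℝ (n + 1) (uncurry F)) :
    ContDiff ℝ n (uncurry fun x t => fderiv ℝ (F · t) x) := by
  have hpartial : (uncurry fun x t => fderiv ℝ (F · t) x)
      = fun p => (fderiv ℝ (uncurry F) p).comp (ContinuousLinearMap.inl ℝ X Y) := by
    ext1 ⟨x, t⟩
    exact (((hF.differentiable (by simp)) (x, t)).hasFDerivAt.comp x
      (hasFDerivAt_prodMk_left (𝕜 := ℝ) x t)).fderiv
  rw [hpartial]
  exact (hF.fderiv_right le_rfl).clm_comp contDiff_const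

section ParametricIntegral

variable {X Y G : Type*} [NormedAddCommGroup X] [NormedSpace ℝ X]
  [NormedAddCommGroup Y] [SecondCountableTopology Y] [MeasurableSpace Y] [BorelSpace Y]
  {μ : Measure Y} [IsLocallyFiniteMeasure μ] [NormedAddCommGroup G] [NormedSpace ℝ G]
  {s : Set Y}

theorem hasFDerivAt_integral_of_continuous [ProperSpace X] (hs : IsCompact s) {F : X → Y → G}
    {F' : X → Y → X →L[ℝ] G} (hF : Continuous (uncurry F)) (hF' : Continuous (uncurry F'))
    (hd : ∀ x t, HasFDerivAt (F · t) (F' x t) x) (x₀ : X) :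
    HasFDerivAt (fun x => ∫ t in s, F x t ∂μ) (∫ t in s, F' x₀ t ∂μ) x₀ := by
  obtain ⟨C, hC⟩ := ((isCompact_closedBall x₀ 1).prod hs).exists_bound_of_continuousOn
    hF'.continuousOn
  refine hasFDerivAt_integral_of_dominated_of_fderiv_le (Metric.ball_mem_nhds x₀ one_pos)
    (bound := fun _ => C) ?_ ?_ ?_ ?_ (integrableOn_const hs.measure_lt_top.ne) ?_
  · exact .of_forall fun x => (hF.comp (Continuous.prodMk_right x)).aestronglyMeasurable
  · exact (hF.comp (Continuous.prodMk_right x₀)).continuousOn.integrableOn_compact hs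
  · exact (hF'.comp (Continuous.prodMk_right x₀)).aestronglyMeasurable
  · filter_upwards [ae_restrict_mem₀ hs.measurableSet.nullMeasurableSet] with t ht x hx
    exact hC (x, t) ⟨Metric.ball_subset_closedBall hx, ht⟩
  · exact .of_forall fun t x _ => hd x t

variable [NormedSpace ℝ Y]

theorem hasFDerivAt_integral_of_contDiff [ProperSpace X] (hs : IsCompact s) {F : X → Y → G}
    (hF : ContDiff ℝ 1 (uncurry F)) (x₀ : X) :
    HasFDerivAt (fun x => ∫ t in s, F x t ∂μ) (∫ t in s, fderiv ℝ (F · t) x₀ ∂μ) x₀ :=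
  hasFDerivAt_integral_of_continuous hs hF.continuous
    (contDiff_uncurry_fderiv_left (n := 0) (by simpa using hF)).continuous
    (fun x t => ((hF.differentiable one_ne_zero).comp (differentiable_id.prodMk
      (differentiable_const t)) x).hasFDerivAt) x₀

theorem fderiv_integral_apply [ProperSpace X] (hs : IsCompact s) {F : X → Y → G}
    (hF : ContDiff ℝ 1 (uncurry F)) (x y : X) :
    fderiv ℝ (fun x => ∫ t in s, F x t ∂μ) x y = ∫ t in s, fderiv ℝ (F · t) x y ∂μ := by
  have hint : IntegrableOn (fun t => fderiv ℝ (F · t) x) s μ :=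
    ((contDiff_uncurry_fderiv_left (n := 0) (by simpa using hF)).continuous.comp
      (Continuous.prodMk_right x)).continuousOn.integrableOn_compact hs
  rw [(hasFDerivAt_integral_of_contDiff hs hF x).fderiv, ContinuousLinearMap.integral_apply hint]

-- Induct along the directional derivatives `fderiv ℝ · x y`: unlike `fderiv`, they keep the
-- codomain `G`, and with it its universe.
theorem contDiff_integral [FiniteDimensional ℝ X] (hs : IsCompact s) {n : ℕ} {F : X → Y → G}
    (hF : ContDiff ℝ n (uncurry F)) : ContDiff ℝ n (fun x => ∫ t in s, F x t ∂μ) := by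
  induction n generalizing F with
  | zero => exact contDiff_zero.2 (continuous_parametric_integral_of_continuous
      (contDiff_zero.1 hF) hs)
  | succ n ih =>
    rw [Nat.cast_succ] at hF ⊢
    have hderiv := hasFDerivAt_integral_of_contDiff (μ := μ) hs (hF.of_le (by simp))
    have hpartial := contDiff_uncurry_fderiv_left hF
    refine contDiff_succ_iff_fderiv_apply.2 ⟨fun x => (hderiv x).differentiableAt, by simp,
      fun y => ?_⟩
    simp_rw [fderiv_integral_apply hs (hF.of_le (by simp))]
    exact ih ((ContinuousLinearMap.apply ℝ G y).contDiff.comp hpartial)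

end ParametricIntegral

section Laplacian

variable {k : ℕ}

theorem lap_mul_const {f : E k → ℝ} (hf : ContDiff ℝ 2 f) (c : ℝ) (x : E k) :
    lap (fun z => f z * c) x = lap f x * c := by
  have hdf : Differentiable ℝ f := hf.differentiable (by simp)
  have hdf' : Differentiable ℝ (fderiv ℝ f) :=
    (hf.fderiv_right (m := 1) le_rfl).differentiable one_ne_zero
  simp_rw [lap, Finset.sum_mul, fderiv_mul_const (hdf _)]
  refine Finset.sum_congr rfl fun i _ => ?_
  simp only [smul_apply, smul_eq_mul]
  rw [fderiv_const_mul (by fun_prop), smul_apply, smul_eq_mul, mul_comm]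

theorem lap_integral {Y : Type*} [NormedAddCommGroup Y] [NormedSpace ℝ Y]
    [SecondCountableTopology Y] [MeasurableSpace Y] [BorelSpace Y] {μ : Measure Y}
    [IsLocallyFiniteMeasure μ] {s : Set Y} (hs : IsCompact s) {F : E k → Y → ℝ}
    (hF : ContDiff ℝ 2 (uncurry F)) (x : E k) :
    lap (fun x => ∫ t in s, F x t ∂μ) x = ∫ t in s, lap (F · t) x ∂μ := by
  have hpartial : ∀ y, ContDiff ℝ 1 (uncurry fun x t => fderiv ℝ (F · t) x y) := fun y =>
    (ContinuousLinearMap.apply ℝ ℝ y).contDiff.comp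
      (contDiff_uncurry_fderiv_left (n := 1) (by simpa [one_add_one_eq_two] using hF))
  have hcont : ∀ y, Continuous fun t => fderiv ℝ (fun z => fderiv ℝ (F · t) z y) x y := fun y =>
    (((ContinuousLinearMap.apply ℝ ℝ y).contDiff.comp (contDiff_uncurry_fderiv_left (n := 0)
      (by simpa using hpartial y))).continuous.comp (Continuous.prodMk_right x))
  simp_rw [lap, fderiv_integral_apply hs (hF.of_le (by simp)),
    fderiv_integral_apply hs (hpartial _)]
  exact (integral_finsetSum _ fun i _ => (hcont _).continuousOn.integrableOn_compact hs).symm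

end Laplacian

theorem Function.Periodic.deriv {g : ℝ → ℝ} {c : ℝ} (hg : Periodic g c) :
    Periodic (deriv g) c := fun t => by
  rw [← deriv_comp_add_const, funext hg]

theorem hasDerivAt_cos_mul (k t : ℝ) :
    HasDerivAt (fun t => cos (k * t)) (-(k * sin (k * t))) t := by
  simpa [mul_comm] using ((hasDerivAt_id t).const_mul k).cos

theorem hasDerivAt_sin_mul (k t : ℝ) : HasDerivAt (fun t => sin (k * t)) (k * cos (k * t)) t := by
  simpa [mul_comm] using ((hasDerivAt_id t).const_mul k).sin

theorem integral_deriv_mul_cos {u : ℝ → ℝ} (hu : ContDiff ℝ 1 u) (hπ : u π = u (-π)) (k : ℝ) :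
    ∫ t in (-π)..π, deriv u t * cos (k * t) = k * ∫ t in (-π)..π, u t * sin (k * t) := by
  have h := intervalIntegral.integral_mul_deriv_eq_deriv_mul (a := -π) (b := π)
    (fun t _ => hasDerivAt_cos_mul k t) (fun t _ => (hu.differentiable one_ne_zero t).hasDerivAt)
    ((by fun_prop : Continuous fun t => -(k * sin (k * t))).intervalIntegrable _ _)
    ((hu.continuous_deriv le_rfl).intervalIntegrable _ _)
  simp only [mul_neg, cos_neg, hπ, sub_self, neg_mul, intervalIntegral.integral_neg,
    zero_sub, neg_neg] at h
  simp_rw [mul_comm (deriv u _), h, ← intervalIntegral.integral_const_mul, mul_assoc, mul_comm]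

theorem integral_deriv_mul_sin {u : ℝ → ℝ} (hu : ContDiff ℝ 1 u) (k : ℕ) :
    ∫ t in (-π)..π, deriv u t * sin (k * t) = -(k * ∫ t in (-π)..π, u t * cos (k * t)) := by
  have h := intervalIntegral.integral_mul_deriv_eq_deriv_mul (a := -π) (b := π)
    (fun t _ => hasDerivAt_sin_mul k t) (fun t _ => (hu.differentiable one_ne_zero t).hasDerivAt)
    ((by fun_prop : Continuous fun t => k * cos (k * t)).intervalIntegrable _ _)
    ((hu.continuous_deriv le_rfl).intervalIntegrable _ _)
  simp only [mul_neg, sin_neg, sin_nat_mul_pi, neg_zero, zero_mul, sub_self, zero_sub] at h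
  simp_rw [mul_comm (deriv u _), h, ← intervalIntegral.integral_const_mul, mul_assoc, mul_comm]

theorem integral_deriv_deriv_mul_cos {g : ℝ → ℝ} (hg : ContDiff ℝ 2 g) (hper : Periodic g (2 * π))
    (k : ℕ) :
    ∫ t in (-π)..π, deriv (deriv g) t * cos (k * t)
      = -(k ^ 2 * ∫ t in (-π)..π, g t * cos (k * t)) := by
  have hg' : ContDiff ℝ 1 (deriv g) := hg.iterate_deriv' 1 1
  rw [integral_deriv_mul_cos hg' (by simpa [two_mul] using hper.deriv (-π)),
    integral_deriv_mul_sin (hg.of_le (by norm_num))]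
  ring

theorem d2_const_mul_cos (c k t : ℝ) :
    d2 (fun u => c * cos (k * u)) t = -(k ^ 2 * (c * cos (k * t))) := by
  have h₁ : deriv (fun u => c * cos (k * u)) = fun u => c * -(k * sin (k * u)) :=
    funext fun u => ((hasDerivAt_cos_mul k u).const_mul c).deriv
  have h₂ : HasDerivAt (fun u => c * -(k * sin (k * u))) (c * -(k * (k * cos (k * t)))) t :=
    ((hasDerivAt_sin_mul k t).const_mul k).neg.const_mul c
  rw [d2, h₁, h₂.deriv]
  ring

theorem AddCircle.eq_zero_of_fourierCoeff_eq_zero {T : ℝ} [Fact (0 < T)] {f : C(AddCircle T, ℂ)}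
    (hf : ∀ n, fourierCoeff f n = 0) : f = 0 := by
  refine ContinuousMap.toLp_injective (p := 2) (𝕜 := ℂ) haarAddCircle ?_
  rw [map_zero]
  refine fourierBasis.repr.injective ?_
  ext n
  rw [fourierBasis_repr, fourierCoeff_toLp]
  simpa using hf n

theorem intervalIntegral.integral_eq_zero_of_odd {f : ℝ → ℝ} (hf : ∀ x, f (-x) = -f x) (a : ℝ) :
    ∫ x in -a..a, f x = 0 := by
  have h := intervalIntegral.integral_comp_neg (a := -a) (b := a) f
  simp only [hf, intervalIntegral.integral_neg, neg_neg] at h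
  linarith

theorem fourier_coe_two_pi (n : ℤ) (x : ℝ) :
    fourier n (x : AddCircle (2 * π)) = cos (n * x) + sin (n * x) * Complex.I := by
  rw [fourier_coe_apply, Complex.ofReal_cos, Complex.ofReal_sin, ← Complex.exp_mul_I]
  congr 1
  push_cast
  field_simp

theorem eq_zero_of_integral_mul_cos_eq_zero {g : ℝ → ℝ} (hg : Continuous g)
    (hper : Periodic g (2 * π)) (heven : Function.Even g)
    (hcos : ∀ k : ℕ, ∫ t in (-π)..π, g t * cos (k * t) = 0) : g = 0 := by
  have : Fact (0 < 2 * π) := ⟨by positivity⟩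
  have hsin (n : ℤ) : ∫ t in (-π)..π, g t * sin (n * t) = 0 :=
    intervalIntegral.integral_eq_zero_of_odd (fun t => by simp [heven t]) π
  have hcos' (n : ℤ) : ∫ t in (-π)..π, g t * cos (n * t) = 0 := by
    obtain ⟨m, rfl | rfl⟩ := Int.eq_nat_or_neg n <;> simpa using hcos m
  let G : C(AddCircle (2 * π), ℂ) :=
    ⟨(hper.comp ((↑) : ℝ → ℂ)).lift, (Complex.continuous_ofReal.comp hg).quotient_liftOn' _⟩
  have hG : G = 0 := by
    refine AddCircle.eq_zero_of_fourierCoeff_eq_zero fun n => ?_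
    have hintegrand (x : ℝ) : fourier (-n) (x : AddCircle (2 * π)) • G x
        = ((g x * cos (n * x) : ℝ) : ℂ) - ((g x * sin (n * x) : ℝ) : ℂ) * Complex.I := by
      rw [fourier_coe_two_pi, smul_eq_mul]
      change _ * (g x : ℂ) = _
      push_cast
      simp only [neg_mul, Complex.cos_neg, Complex.sin_neg]
      ring
    rw [fourierCoeff_eq_intervalIntegral _ _ (-π), show -π + 2 * π = π by ring]
    simp_rw [hintegrand]
    rw [intervalIntegral.integral_sub, intervalIntegral.integral_mul_const,
      intervalIntegral.integral_ofReal, intervalIntegral.integral_ofReal, hcos', hsin]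
    · simp
    all_goals exact (by fun_prop : Continuous _).intervalIntegrable _ _
  funext t
  exact Complex.ofReal_eq_zero.1 congr($hG (t : AddCircle (2 * π)))

theorem integral_Icc_eq_intervalIntegral {μ : Measure ℝ} [NullSingletonClass μ] {a b : ℝ}
    (hab : a ≤ b) (f : ℝ → ℝ) : ∫ t in Set.Icc a b, f t ∂μ = ∫ t in a..b, f t ∂μ := by
  rw [intervalIntegral.integral_of_le hab, integral_Icc_eq_integral_Ioc]

theorem integrableOn_univ_prod_iff {α β : Type*} [MeasurableSpace α] [MeasurableSpace β]
    {μ : Measure α} {ν : Measure β} [SFinite μ] [SFinite ν] {f : α × β → ℝ} {s : Set β} :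
    IntegrableOn f (Set.univ ×ˢ s) (μ.prod ν) ↔ Integrable f (μ.prod (ν.restrict s)) := by
  rw [IntegrableOn, ← Measure.prod_restrict, Measure.restrict_univ]

theorem sq_integral_le_measureReal_mul_integral_sq {α : Type*} [MeasurableSpace α]
    {ν : Measure α} [IsFiniteMeasure ν] {f : α → ℝ} (hf : Integrable f ν)
    (hf2 : Integrable (fun a => f a ^ 2) ν) :
    (∫ a, f a ∂ν) ^ 2 ≤ ν.real Set.univ * ∫ a, f a ^ 2 ∂ν := by
  set m := ν.real Set.univ
  set I := ∫ a, f a ∂ν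
  rcases eq_zero_or_neZero ν with rfl | _
  · simp [I]
  have hm : 0 < m := measureReal_univ_pos
  have hexpand : ∫ a, (m * f a - I) ^ 2 ∂ν = m * (m * ∫ a, f a ^ 2 ∂ν - I ^ 2) := by
    have h : (fun a => (m * f a - I) ^ 2) = fun a => m ^ 2 * f a ^ 2 - 2 * m * I * f a + I ^ 2 :=
      funext fun a => by ring
    have hquad : Integrable (fun a => m ^ 2 * f a ^ 2 - 2 * m * I * f a) ν :=
      (hf2.const_mul _).sub (hf.const_mul _)
    rw [h, integral_add hquad (integrable_const _), integral_sub (hf2.const_mul _)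
      (hf.const_mul _), integral_const_mul, integral_const_mul, integral_const, smul_eq_mul]
    ring
  have hnonneg := hexpand ▸ integral_nonneg fun a => sq_nonneg (m * f a - I)
  nlinarith

-- Over the compact `Icc`, for the parametric-integral lemmas; it equals the integral over `Ioo`.
def cosCoeff {X : Type*} (w : X → ℝ → ℝ) (n : ℕ) (x : X) : ℝ :=
  ∫ t in Set.Icc (-π) π, w x t * cos (n * t)

theorem cosCoeff_eq_intervalIntegral {X : Type*} (w : X → ℝ → ℝ) (n : ℕ) (x : X) :
    cosCoeff w n x = ∫ t in (-π)..π, w x t * cos (n * t) :=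
  integral_Icc_eq_intervalIntegral (by linarith [pi_pos]) _

namespace SymPerEigenfun

variable {k : ℕ} {b : E k → ℝ} {μ : ℝ} {w : E k → ℝ → ℝ}

theorem contDiff_uncurry_mul_cos (hw : SymPerEigenfun b μ w) (n : ℕ) :
    ContDiff ℝ 2 (uncurry fun x t => w x t * cos (n * t)) :=
  hw.2.1.mul (contDiff_cos.comp (contDiff_const.mul contDiff_snd))

theorem contDiff_left (hw : SymPerEigenfun b μ w) (t : ℝ) : ContDiff ℝ 2 (w · t) :=
  hw.2.1.comp (contDiff_id.prodMk contDiff_const)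

theorem contDiff_right (hw : SymPerEigenfun b μ w) (x : E k) : ContDiff ℝ 2 (w x) :=
  hw.2.1.comp (contDiff_const.prodMk contDiff_id)

theorem exists_cosCoeff_ne_zero (hw : SymPerEigenfun b μ w) : ∃ n, cosCoeff w n ≠ 0 := by
  obtain ⟨hne, -, -, heven, hper, -⟩ := id hw
  by_contra! h
  obtain ⟨x, hx⟩ := Function.ne_iff.1 hne
  refine hx (eq_zero_of_integral_mul_cos_eq_zero (hw.contDiff_right x).continuous (hper x)
    (heven x) fun n => ?_)
  rw [← cosCoeff_eq_intervalIntegral, h n, Pi.zero_apply]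

theorem integrable_cosCoeff_sq (hw : SymPerEigenfun b μ w) (n : ℕ) :
    Integrable fun x => cosCoeff w n x ^ 2 := by
  obtain ⟨-, -, -, -, -, hint, -⟩ := id hw
  set ν := volume.restrict (Set.Ioo (-π) π)
  have hw2 : Integrable (fun p : E k × ℝ => w p.1 p.2 ^ 2) ((volume : Measure (E k)).prod ν) := by
    rwa [← integrableOn_univ_prod_iff, ← Measure.volume_eq_prod]
  refine (hw2.integral_prod_left.const_mul (ν.real Set.univ)).mono'
    ((contDiff_integral isCompact_Icc (hw.contDiff_uncurry_mul_cos n)).continuous.pow 2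
      |>.aestronglyMeasurable) (ae_of_all _ fun x => ?_)
  have hcont : Continuous (w x) := (hw.contDiff_right x).continuous
  have hintOn {f : ℝ → ℝ} (hf : Continuous f) : Integrable f ν :=
    hf.integrableOn_Icc.mono_set Set.Ioo_subset_Icc_self
  have hcos_sq_le t : (w x t * cos (n * t)) ^ 2 ≤ w x t ^ 2 := by
    rw [mul_pow]
    exact mul_le_of_le_one_right (sq_nonneg _) (cos_sq_le_one _)
  rw [Real.norm_eq_abs, abs_of_nonneg (sq_nonneg _), cosCoeff, integral_Icc_eq_integral_Ioo]
  calc (∫ t, w x t * cos (n * t) ∂ν) ^ 2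
      ≤ ν.real Set.univ * ∫ t, (w x t * cos (n * t)) ^ 2 ∂ν :=
        sq_integral_le_measureReal_mul_integral_sq (hintOn (by fun_prop)) (hintOn (by fun_prop))
    _ ≤ ν.real Set.univ * ∫ t, w x t ^ 2 ∂ν :=
        mul_le_mul_of_nonneg_left (integral_mono (hintOn (by fun_prop)) (hintOn (by fun_prop))
          hcos_sq_le) measureReal_nonneg

theorem lap_cosCoeff (hw : SymPerEigenfun b μ w) (n : ℕ) (x : E k) :
    -lap (cosCoeff w n) x - b x * cosCoeff w n x = (μ - n ^ 2) * cosCoeff w n x := by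
  obtain ⟨-, -, -, -, hper, -, heq⟩ := id hw
  have hlap :
      lap (cosCoeff w n) x = ∫ t in Set.Icc (-π) π, lap (fun z => w z t * cos (n * t)) x :=
    lap_integral isCompact_Icc (hw.contDiff_uncurry_mul_cos n) x
  have hslice t : lap (fun z => w z t * cos (n * t)) x
      = -(μ + b x) * (w x t * cos (n * t)) - d2 (w x) t * cos (n * t) := by
    rw [lap_mul_const (hw.contDiff_left t)]
    linear_combination (-cos (n * t)) * heq x t
  have hibp : ∫ t in Set.Icc (-π) π, d2 (w x) t * cos (n * t) = -(n ^ 2 * cosCoeff w n x) := by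
    rw [integral_Icc_eq_intervalIntegral (by linarith [pi_pos]), cosCoeff_eq_intervalIntegral]
    exact integral_deriv_deriv_mul_cos (hw.contDiff_right x) (hper x) n
  have hwx : Continuous (w x) := (hw.contDiff_right x).continuous
  have hd2 : Continuous (d2 (w x)) :=
    ((hw.contDiff_right x).iterate_deriv' 1 1).continuous_deriv le_rfl
  simp_rw [hlap, hslice]
  rw [integral_sub ((by fun_prop : Continuous _).integrableOn_Icc)
    ((by fun_prop : Continuous _).integrableOn_Icc), integral_const_mul, hibp]
  unfold cosCoeff
  ring

theorem radEigenfun_cosCoeff (hw : SymPerEigenfun b μ w) {n : ℕ} (hn : cosCoeff w n ≠ 0) :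
    RadEigenfun b (μ - n ^ 2) (cosCoeff w n) := by
  obtain ⟨-, -, hrad, -⟩ := id hw
  refine ⟨hn, contDiff_integral isCompact_Icc (hw.contDiff_uncurry_mul_cos n), fun x y hxy => ?_,
    hw.integrable_cosCoeff_sq n, hw.lap_cosCoeff n⟩
  simp only [cosCoeff, hrad x y _ hxy]

end SymPerEigenfun

theorem RadEigenfun.symPerEigenfun_mul_cos {k : ℕ} {b : E k → ℝ} {μ : ℝ} {ψ : E k → ℝ}
    (hψ : RadEigenfun b μ ψ) (n : ℕ) :
    SymPerEigenfun b (μ + n ^ 2) (fun x t => ψ x * cos (n * t)) := by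
  obtain ⟨hne, hC, hrad, hint, heq⟩ := hψ
  refine ⟨?_, (hC.comp contDiff_fst).mul (contDiff_cos.comp (contDiff_const.mul contDiff_snd)),
    fun x x' t h => by simp only [hrad x x' h], fun x t => by simp, fun x t => ?_, ?_,
    fun x t => ?_⟩
  · obtain ⟨x, hx⟩ := Function.ne_iff.1 hne
    exact Function.ne_iff.2 ⟨x, Function.ne_iff.2 ⟨0, by simpa using hx⟩⟩
  · change ψ x * cos (n * (t + 2 * π)) = ψ x * cos (n * t)
    rw [mul_add, cos_add_nat_mul_two_pi]
  · rw [Measure.volume_eq_prod, integrableOn_univ_prod_iff]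
    simp_rw [mul_pow]
    exact hint.mul_prod ((by fun_prop : Continuous fun t => cos (n * t) ^ 2).integrableOn_Icc
      |>.mono_set Set.Ioo_subset_Icc_self)
  · rw [lap_mul_const hC, d2_const_mul_cos]
    linear_combination cos (n * t) * heq x

theorem symmetric_periodic_eigenvalues_by_separation_general
    (M : ℕ) (b : E M → ℝ)
    (μ₀ : ℝ) (ψ₀ : E M → ℝ) (hψ₀ : RadEigenfun b μ₀ ψ₀)
    (huniq : ∀ μ ≤ (0 : ℝ), μ ≠ μ₀ → ¬ IsRadEigenvalue b μ) :
    ∀ μ ≤ (0 : ℝ),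
      ((∃ w, SymPerEigenfun b μ w) ↔ ∃ k : ℕ, μ = μ₀ + (k : ℝ) ^ 2) ∧
      (∀ k : ℕ, μ = μ₀ + (k : ℝ) ^ 2 →
        SymPerEigenfun b μ (fun x t => ψ₀ x * Real.cos (k * t))) := by
  intro μ hμ
  have hseparated (k : ℕ) (hk : μ = μ₀ + k ^ 2) :
      SymPerEigenfun b μ fun x t => ψ₀ x * cos (k * t) :=
    hk ▸ hψ₀.symPerEigenfun_mul_cos k
  refine ⟨⟨fun ⟨w, hw⟩ => ?_, fun ⟨k, hk⟩ => ⟨_, hseparated k hk⟩⟩, hseparated⟩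
  obtain ⟨n, hn⟩ := hw.exists_cosCoeff_ne_zero
  have hle : μ - n ^ 2 ≤ 0 := by linarith [sq_nonneg (n : ℝ)]
  have heq : μ - n ^ 2 = μ₀ :=
    not_not.1 fun hne => huniq _ hle hne ⟨_, hw.radEigenfun_cosCoeff hn⟩
  exact ⟨n, by linarith⟩

/-- separation of variables.  If μ₀ < 0 is the only nonpositive radial
eigenvalue of −Δ − b on ℝ^{N−1}, with eigenfunction ψ₀, then the nonpositive
symmetric-periodic eigenvalues of −Δ − b on ℝᴺ are exactly the numbers μ₀ + k²
(k ∈ ℕ, μ₀ + k² ≤ 0), with eigenfunctions ψ₀(x')cos(k x_N). -/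
theorem symmetric_periodic_eigenvalues_by_separation
    (M : ℕ) (hM : 1 ≤ M) (b : E M → ℝ) (hbC : Continuous b) (hbB : ∃ C, ∀ x, |b x| ≤ C)
    (μ₀ : ℝ) (hμ₀ : μ₀ < 0) (ψ₀ : E M → ℝ) (hψ₀ : RadEigenfun b μ₀ ψ₀)
    (huniq : ∀ μ ≤ (0 : ℝ), μ ≠ μ₀ → ¬ IsRadEigenvalue b μ) :
    ∀ μ ≤ (0 : ℝ),
      ((∃ w, SymPerEigenfun b μ w) ↔ ∃ k : ℕ, μ = μ₀ + (k : ℝ) ^ 2) ∧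
      (∀ k : ℕ, μ = μ₀ + (k : ℝ) ^ 2 →
        SymPerEigenfun b μ (fun x t => ψ₀ x * Real.cos (k * t))) :=
  symmetric_periodic_eigenvalues_by_separation_general M b μ₀ ψ₀ hψ₀ huniq
end
end
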